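/- Let V be a topological space and T a subset of V, endowed with the subspace topology, with inclusion map ι : T → V. The functor Opens(V) ⥤ Opens(T) sending an open subset U of V to U ∩ T (i.e., the functor Opens.map ι given by taking preimages under ι) exhibits Opens(T) as the localization of the category Opens(V) at the class of T-isomorphisms. -/

import Mathlib

/-!
STATEMENT 1: Let `V` be a topological space and `T ⊆ V` with the subspace topology, with
inclusion `ι : T → V`. The functor `Opens V ⥤ Opens T`, `U ↦ U ∩ T` (i.e. `Opens.map ι`,
taking preimages under `ι`) exhibits `Opens T` as the localization of `Opens V` at the
class of `T`-isomorphisms.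
-/

open CategoryTheory TopologicalSpace

universe u

/-- The class of `T`-isomorphisms in `Opens V`: an inclusion `V'' ⟶ V'` of open subsets of `V`
is a `T`-isomorphism if `V' ∩ T = V'' ∩ T`. -/
def TIso (V : Type u) [TopologicalSpace V] (T : Set V) : MorphismProperty (Opens V) :=
  fun V'' V' _ => (V' : Set V) ∩ T = (V'' : Set V) ∩ T

/-- The inclusion of the subspace `T` into `V`, as a morphism of `TopCat`. -/
def subspaceIncl (V : Type u) [TopologicalSpace V] (T : Set V) :
    TopCat.of T ⟶ TopCat.of V :=
  TopCat.ofHom ⟨Subtype.val, continuous_subtype_val⟩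

/-!
Preimage along an inducing map `ι : T → V` has a right adjoint on opens, sending `W` to the
largest open `U` with `U ∩ T ⊆ W`; it is fully faithful because every open of `T` is of the
form `U ∩ T`. A left adjoint whose right adjoint is fully faithful is the localization at the
morphisms it inverts, and in the poset `Opens T` these are exactly the `T`-isomorphisms.
-/

instance Topology.IsInducing.full_functor {X Y : TopCat.{u}} {f : X ⟶ Y}
    (hf : Topology.IsInducing f) : hf.functor.Full where
  map_surjective g := ⟨homOfLE (hf.opensGI.u_le_u_iff.mp g.le), rfl⟩

theorem Topology.IsInducing.opensMap_isLocalization {X Y : TopCat.{u}} {f : X ⟶ Y}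
    (hf : Topology.IsInducing f) :
    (Opens.map f).IsLocalization
      ((MorphismProperty.isomorphisms (Opens X)).inverseImage (Opens.map f)) :=
  hf.adjunction.isLocalization

theorem isInducing_subspaceIncl (V : Type u) [TopologicalSpace V] (T : Set V) :
    Topology.IsInducing (subspaceIncl V T) :=
  Topology.IsInducing.subtypeVal

theorem tIso_eq_inverseImage_isomorphisms (V : Type u) [TopologicalSpace V] (T : Set V) :
    TIso (TopCat.of V) T =
      (MorphismProperty.isomorphisms (Opens (TopCat.of T))).inverseImage
        (Opens.map (subspaceIncl V T)) := by
  ext V'' V' f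
  change _ ↔ IsIso _
  rw [PartialOrder.isIso_iff_eq, ← SetLike.coe_set_eq, Opens.map_coe, Opens.map_coe]
  change _ ↔ Subtype.val ⁻¹' _ = Subtype.val ⁻¹' _
  rw [Subtype.preimage_coe_eq_preimage_coe_iff, Set.inter_comm T, Set.inter_comm T, eq_comm]
  rfl

theorem opensMap_isLocalization_tIso (V : Type u) [TopologicalSpace V] (T : Set V) :
    (Opens.map (subspaceIncl V T)).IsLocalization (TIso (TopCat.of V) T) := by
  rw [tIso_eq_inverseImage_isomorphisms]
  exact (isInducing_subspaceIncl V T).opensMap_isLocalization
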